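/- Assume the Popov matrix Π = [[Q, S],[Sᵀ, R]] is positive semidefinite. If X is a symmetric solution of CGDARE(Σ), then X annihilates the reachable subspace ℛ₀ of the pair (A_X, B G_X); that is, X A_X^k B G_X = 0 for every k ≥ 0. -/

import Mathlib

/-!
For an input `u` with `S_Xᵀ x + R_X u = 0`, the GDARE and the kernel condition give the
dissipation identity `xᵀ X x = π(x, u) + x⁺ᵀ X x⁺` (with `x⁺ = A x + B u` and `π` the Popov form)
and the costate relation `X x = Aᵀ X x⁺ + Q x + S u`. Every closed-loop step
`x ↦ A_X x + B G_X w` uses such an input, namely `u = G_X w - K_X x`. Hence `V x = xᵀ X x` does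
not increase along the closed loop, so `V ≤ V 0 = 0` on the reachable subspace. Conversely, by
Cayley–Hamilton every reachable state can be steered back to `0`; summing the dissipation identity
along such a path gives `V ≥ 0`, so all Popov terms vanish, `Π ≥ 0` forces `Q x + S u = 0`, and the
costate relation carries `X x = 0` back from the endpoint `0` to the starting state.
-/

open Matrix

namespace Matrix

variable {α ι κ μ ν : Type*} [CommRing α]

theorem exists_pow_eq_sum_smul_pow_lt_card [Fintype ι] [DecidableEq ι] [Nontrivial α]
    (M : Matrix ι ι α) (k : ℕ) :
    ∃ c : ℕ → α, M ^ k = ∑ i ∈ Finset.range (Fintype.card ι), c i • M ^ i := by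
  rcases isEmpty_or_nonempty ι with hι | hι
  · exact ⟨0, Subsingleton.elim _ _⟩
  have hdeg : (Polynomial.X ^ k %ₘ M.charpoly).natDegree < Fintype.card ι := by
    have hcard : M.charpoly.natDegree = Fintype.card ι := M.charpoly_natDegree_eq_dim
    have hne : M.charpoly ≠ 1 := fun h => by
      simp [h] at hcard
      exact Fintype.card_ne_zero hcard.symm
    exact hcard ▸ Polynomial.natDegree_modByMonic_lt _ M.charpoly_monic hne
  exact ⟨_, by rw [pow_eq_aeval_mod_charpoly, Polynomial.aeval_eq_sum_range' hdeg]⟩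

theorem mul_comm_of_penrose [Fintype κ] {P M : Matrix κ κ α} (hP : Pᵀ = P) (h1 : P * M * P = P)
    (h3 : (P * M)ᵀ = P * M) (h4 : (M * P)ᵀ = M * P) : P * M = M * P := by
  have e3 : Mᵀ * P = P * M := by rw [← h3, transpose_mul, hP]
  have e4 : P * Mᵀ = M * P := by rw [← h4, transpose_mul, hP]
  calc P * M = Mᵀ * (P * M * P) := by rw [h1, e3]
    _ = (Mᵀ * P) * (M * P) := by simp only [Matrix.mul_assoc]
    _ = (P * M) * (P * Mᵀ) := by rw [e3, e4]
    _ = M * P := by rw [← Matrix.mul_assoc, h1, e4]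

theorem mul_eq_zero_of_ker_le [Fintype κ] [Fintype μ] {P : Matrix ν κ α} {N : Matrix ι κ α}
    {G : Matrix κ μ α}
    (hker : ∀ v, P *ᵥ v = 0 → N *ᵥ v = 0) (hG : P * G = 0) : N * G = 0 :=
  ext_iff_mulVec.2 fun v => by
    simpa [← mulVec_mulVec] using hker _ (by rw [mulVec_mulVec, hG, zero_mulVec])

end Matrix

section ControlStep

variable {α ι κ : Type*} [CommRing α] [Fintype ι] [Fintype κ]

def ControlStep (F : Matrix ι ι α) (H : Matrix ι κ α) (x y : ι → α) : Prop :=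
  ∃ w, y = F *ᵥ x + H *ᵥ w

variable [DecidableEq ι] (F : Matrix ι ι α) (H : Matrix ι κ α)

theorem ControlStep.reflTransGen_zero_pow_mulVec (v : κ → α) (k : ℕ) :
    Relation.ReflTransGen (ControlStep F H) 0 (F ^ k *ᵥ H *ᵥ v) := by
  induction k with
  | zero => exact .single ⟨v, by simp⟩
  | succ k ih => exact ih.tail ⟨0, by simp [pow_succ', ← mulVec_mulVec]⟩

theorem ControlStep.reflTransGen_zero_of_pow_mulVec_eq_sum (N : ℕ) (a : ι → α) (v : ℕ → κ → α)
    (h : F ^ N *ᵥ a = ∑ i ∈ Finset.range N, F ^ i *ᵥ H *ᵥ v i) :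
    Relation.ReflTransGen (ControlStep F H) a 0 := by
  induction N generalizing a with
  | zero =>
    simp only [pow_zero, one_mulVec, Finset.range_zero, Finset.sum_empty] at h
    exact h ▸ .refl
  | succ N ih =>
    refine .head ⟨-v N, rfl⟩ (ih _ ?_)
    rw [Finset.sum_range_succ, pow_succ, ← mulVec_mulVec] at h
    rw [mulVec_add, h, mulVec_neg, mulVec_neg, add_neg_cancel_right]

theorem ControlStep.reflTransGen_pow_mulVec_zero [Nontrivial α] (v : κ → α) (k : ℕ) :
    Relation.ReflTransGen (ControlStep F H) (F ^ k *ᵥ H *ᵥ v) 0 := by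
  obtain ⟨c, hc⟩ := F.exists_pow_eq_sum_smul_pow_lt_card (Fintype.card ι + k)
  refine reflTransGen_zero_of_pow_mulVec_eq_sum F H (Fintype.card ι) _ (fun i => c i • v) ?_
  rw [mulVec_mulVec (M := F ^ _) (N := F ^ k), ← pow_add, hc, sum_mulVec]
  simp only [smul_mulVec, mulVec_smul]

end ControlStep

section Riccati

variable {ι κ : Type*} [Fintype ι] [Fintype κ]
  (A : Matrix ι ι ℝ) (B : Matrix ι κ ℝ) (Q : Matrix ι ι ℝ) (S : Matrix ι κ ℝ) (R : Matrix κ κ ℝ)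
  (X : Matrix ι ι ℝ)

def popovForm (x : ι → ℝ) (u : κ → ℝ) : ℝ :=
  Sum.elim x u ⬝ᵥ fromBlocks Q S Sᵀ R *ᵥ Sum.elim x u

/-- The first-order condition in `u` for minimising `popovForm Q S R x u + V (A x + B u)`, where
`V z = z ⬝ᵥ X *ᵥ z`. -/
def IsStationaryInput (x : ι → ℝ) (u : κ → ℝ) : Prop :=
  (Aᵀ * X * B + S)ᵀ *ᵥ x + (R + Bᵀ * X * B) *ᵥ u = 0

def OptimalStep (x y : ι → ℝ) : Prop :=
  ∃ u, IsStationaryInput A B S R X x u ∧ y = A *ᵥ x + B *ᵥ u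

variable {Q S R}

theorem popovForm_eq (x : ι → ℝ) (u : κ → ℝ) :
    popovForm Q S R x u = x ⬝ᵥ (Q *ᵥ x + S *ᵥ u) + u ⬝ᵥ (Sᵀ *ᵥ x + R *ᵥ u) := by
  rw [popovForm, fromBlocks_mulVec, Sum.elim_comp_inl, Sum.elim_comp_inr,
    sumElim_dotProduct_sumElim]

theorem popovForm_nonneg (hPi : (fromBlocks Q S Sᵀ R).PosSemidef) (x : ι → ℝ) (u : κ → ℝ) :
    0 ≤ popovForm Q S R x u := by
  simpa [popovForm] using hPi.dotProduct_mulVec_nonneg (Sum.elim x u)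

theorem mulVec_add_mulVec_eq_zero_of_popovForm_eq_zero (hPi : (fromBlocks Q S Sᵀ R).PosSemidef)
    {x : ι → ℝ} {u : κ → ℝ} (h : popovForm Q S R x u = 0) : Q *ᵥ x + S *ᵥ u = 0 := by
  have hz := (hPi.dotProduct_mulVec_zero_iff (Sum.elim x u)).1 (by simpa [popovForm] using h)
  rw [fromBlocks_mulVec, Sum.elim_comp_inl, Sum.elim_comp_inr] at hz
  exact funext fun i => congrFun hz (Sum.inl i)

variable {A B X} {x : ι → ℝ} {u : κ → ℝ}

theorem IsStationaryInput.costate [DecidableEq κ] (RXd : Matrix κ κ ℝ)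
    (hGDARE : X = Aᵀ * X * A - (Aᵀ * X * B + S) * RXd * (Aᵀ * X * B + S)ᵀ + Q)
    (hSG : (Aᵀ * X * B + S) * (1 - RXd * (R + Bᵀ * X * B)) = 0)
    (h : IsStationaryInput A B S R X x u) :
    Aᵀ *ᵥ X *ᵥ (A *ᵥ x + B *ᵥ u) + (Q *ᵥ x + S *ᵥ u) = X *ᵥ x := by
  set SX := Aᵀ * X * B + S
  set RX := R + Bᵀ * X * B
  have hA : Aᵀ * X * A + Q = X + SX * RXd * SXᵀ := by linear_combination (norm := abel) -hGDARE
  have hx : SXᵀ *ᵥ x = -(RX *ᵥ u) := eq_neg_of_add_eq_zero_left h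
  calc Aᵀ *ᵥ X *ᵥ (A *ᵥ x + B *ᵥ u) + (Q *ᵥ x + S *ᵥ u)
      = (Aᵀ * X * A + Q) *ᵥ x + SX *ᵥ u := by
        simp only [SX, mulVec_add, add_mulVec, mulVec_mulVec, Matrix.mul_assoc]; abel
    _ = X *ᵥ x + (SX * (1 - RXd * RX)) *ᵥ u := by
        rw [hA, Matrix.mul_sub, Matrix.mul_one, sub_mulVec, add_mulVec, ← mulVec_mulVec,
          ← mulVec_mulVec, hx, ← mulVec_mulVec, ← mulVec_mulVec]
        simp only [mulVec_neg]
        abel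
    _ = X *ᵥ x := by rw [hSG, zero_mulVec, add_zero]

theorem IsStationaryInput.input_costate (hX : Xᵀ = X) (h : IsStationaryInput A B S R X x u) :
    Bᵀ *ᵥ X *ᵥ (A *ᵥ x + B *ᵥ u) + (Sᵀ *ᵥ x + R *ᵥ u) = 0 := by
  have hSX : (Aᵀ * X * B + S)ᵀ = Bᵀ * X * A + Sᵀ := by
    rw [transpose_add, transpose_mul, transpose_mul, transpose_transpose, hX, Matrix.mul_assoc]
  rw [IsStationaryInput, hSX] at h
  rw [← h]
  simp only [mulVec_add, add_mulVec, mulVec_mulVec, Matrix.mul_assoc]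
  abel

theorem IsStationaryInput.quadForm_eq [DecidableEq κ] (RXd : Matrix κ κ ℝ) (hX : Xᵀ = X)
    (hGDARE : X = Aᵀ * X * A - (Aᵀ * X * B + S) * RXd * (Aᵀ * X * B + S)ᵀ + Q)
    (hSG : (Aᵀ * X * B + S) * (1 - RXd * (R + Bᵀ * X * B)) = 0)
    (h : IsStationaryInput A B S R X x u) :
    x ⬝ᵥ X *ᵥ x = popovForm Q S R x u + (A *ᵥ x + B *ᵥ u) ⬝ᵥ X *ᵥ (A *ᵥ x + B *ᵥ u) := by
  set y := A *ᵥ x + B *ᵥ u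
  have hAy : Aᵀ *ᵥ X *ᵥ y = X *ᵥ x - (Q *ᵥ x + S *ᵥ u) :=
    eq_sub_of_add_eq (h.costate RXd hGDARE hSG)
  have hBy : Bᵀ *ᵥ X *ᵥ y = -(Sᵀ *ᵥ x + R *ᵥ u) := eq_neg_of_add_eq_zero_left (h.input_costate hX)
  have hy : y ⬝ᵥ X *ᵥ y = x ⬝ᵥ Aᵀ *ᵥ X *ᵥ y + u ⬝ᵥ Bᵀ *ᵥ X *ᵥ y := by
    rw [dotProduct_transpose_mulVec, dotProduct_transpose_mulVec, dotProduct_comm (X *ᵥ y),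
      dotProduct_comm (X *ᵥ y), ← add_dotProduct]
  rw [hy, hAy, hBy, popovForm_eq, dotProduct_sub, dotProduct_neg]
  ring

theorem ControlStep.optimalStep [DecidableEq κ] (RXd : Matrix κ κ ℝ)
    (hRG : (R + Bᵀ * X * B) * (1 - RXd * (R + Bᵀ * X * B)) = 0)
    (hRK : (R + Bᵀ * X * B) * (RXd * (Aᵀ * X * B + S)ᵀ) = (Aᵀ * X * B + S)ᵀ) {x y : ι → ℝ}
    (h : ControlStep (A - B * (RXd * (Aᵀ * X * B + S)ᵀ)) (B * (1 - RXd * (R + Bᵀ * X * B))) x y) :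
    OptimalStep A B S R X x y := by
  obtain ⟨w, rfl⟩ := h
  refine ⟨(1 - RXd * (R + Bᵀ * X * B)) *ᵥ w - (RXd * (Aᵀ * X * B + S)ᵀ) *ᵥ x, ?_, ?_⟩
  · rw [IsStationaryInput, mulVec_sub, mulVec_mulVec, mulVec_mulVec, hRG, hRK, zero_mulVec]
    abel
  · rw [mulVec_sub, mulVec_mulVec, mulVec_mulVec, sub_mulVec]
    abel

section Dissipation

variable [DecidableEq κ] (RXd : Matrix κ κ ℝ) (hX : Xᵀ = X)
  (hGDARE : X = Aᵀ * X * A - (Aᵀ * X * B + S) * RXd * (Aᵀ * X * B + S)ᵀ + Q)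
  (hSG : (Aᵀ * X * B + S) * (1 - RXd * (R + Bᵀ * X * B)) = 0)
  (hPi : (fromBlocks Q S Sᵀ R).PosSemidef)
include hX hGDARE hSG hPi

theorem OptimalStep.quadForm_le {x y : ι → ℝ} (h : OptimalStep A B S R X x y) :
    y ⬝ᵥ X *ᵥ y ≤ x ⬝ᵥ X *ᵥ x := by
  obtain ⟨u, hu, rfl⟩ := h
  linarith [hu.quadForm_eq RXd hX hGDARE hSG, popovForm_nonneg hPi x u]

theorem OptimalStep.quadForm_nonpos_of_reflTransGen_zero {r : ι → ℝ}
    (h : Relation.ReflTransGen (OptimalStep A B S R X) 0 r) : r ⬝ᵥ X *ᵥ r ≤ 0 := by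
  induction h with
  | refl => simp
  | tail _ hstep ih => exact (hstep.quadForm_le RXd hX hGDARE hSG hPi).trans ih

theorem OptimalStep.mulVec_eq_zero_of_reflTransGen_zero {a : ι → ℝ}
    (h : Relation.ReflTransGen (OptimalStep A B S R X) a 0) (ha : a ⬝ᵥ X *ᵥ a ≤ 0) :
    X *ᵥ a = 0 := by
  suffices 0 ≤ a ⬝ᵥ X *ᵥ a ∧ (a ⬝ᵥ X *ᵥ a ≤ 0 → X *ᵥ a = 0) from this.2 ha
  clear ha
  induction h using Relation.ReflTransGen.head_induction_on with
  | refl => simp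
  | @head x _ hstep _ ih =>
    obtain ⟨u, hu, rfl⟩ := hstep
    have hV := hu.quadForm_eq RXd hX hGDARE hSG
    have hπ := popovForm_nonneg hPi x u
    refine ⟨by linarith [ih.1], fun hle => ?_⟩
    have hXy := ih.2 (by linarith)
    have hQS := mulVec_add_mulVec_eq_zero_of_popovForm_eq_zero hPi (by linarith [ih.1])
    rw [← hu.costate RXd hGDARE hSG, hXy, hQS, mulVec_zero, add_zero]

end Dissipation

end Riccati

theorem stmt_13_general (n m : ℕ)
    (A : Matrix (Fin n) (Fin n) ℝ) (B : Matrix (Fin n) (Fin m) ℝ)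
    (Q : Matrix (Fin n) (Fin n) ℝ) (S : Matrix (Fin n) (Fin m) ℝ)
    (R : Matrix (Fin m) (Fin m) ℝ)
    (hR : Rᵀ = R)
    (hPi : (Matrix.fromBlocks Q S Sᵀ R).PosSemidef)
    (X : Matrix (Fin n) (Fin n) ℝ) (hX : Xᵀ = X)
    (RXd : Matrix (Fin m) (Fin m) ℝ)
    (pen1 : (R + Bᵀ * X * B) * RXd * (R + Bᵀ * X * B) = R + Bᵀ * X * B)
    (pen3 : ((R + Bᵀ * X * B) * RXd)ᵀ = (R + Bᵀ * X * B) * RXd)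
    (pen4 : (RXd * (R + Bᵀ * X * B))ᵀ = RXd * (R + Bᵀ * X * B))
    (hGDARE : X = Aᵀ * X * A - (Aᵀ * X * B + S) * RXd * (Aᵀ * X * B + S)ᵀ + Q)
    (hker : ∀ v : Fin m → ℝ, (R + Bᵀ * X * B).mulVec v = 0 → (Aᵀ * X * B + S).mulVec v = 0) :
    ∀ k : ℕ,
      X * (A - B * (RXd * (Aᵀ * X * B + S)ᵀ)) ^ k
        * (B * (1 - RXd * (R + Bᵀ * X * B))) = 0 := by
  intro k
  set RX := R + Bᵀ * X * B
  set SX := Aᵀ * X * B + S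
  have hRX : RXᵀ = RX := by
    simp only [RX, transpose_add, transpose_mul, transpose_transpose, hR, hX, Matrix.mul_assoc]
  have hRG : RX * (1 - RXd * RX) = 0 := by
    rw [Matrix.mul_sub, Matrix.mul_one, ← Matrix.mul_assoc, pen1, sub_self]
  have hSG : SX * (1 - RXd * RX) = 0 := mul_eq_zero_of_ker_le hker hRG
  have hSRR : SX * (RXd * RX) = SX := by
    rw [Matrix.mul_sub, Matrix.mul_one, sub_eq_zero] at hSG
    exact hSG.symm
  have hRK : RX * (RXd * SXᵀ) = SXᵀ := by
    rw [← Matrix.mul_assoc, mul_comm_of_penrose hRX pen1 pen3 pen4, ← pen4, ← transpose_mul, hSRR]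
  have hstep : ControlStep (A - B * (RXd * SXᵀ)) (B * (1 - RXd * RX)) ≤ OptimalStep A B S R X :=
    fun _ _ => ControlStep.optimalStep RXd hRG hRK
  refine ext_iff_mulVec.2 fun v => ?_
  rw [zero_mulVec, ← mulVec_mulVec, ← mulVec_mulVec]
  refine OptimalStep.mulVec_eq_zero_of_reflTransGen_zero RXd hX hGDARE hSG hPi
    (Relation.ReflTransGen.mono hstep _ _ (ControlStep.reflTransGen_pow_mulVec_zero _ _ v k)) ?_
  exact OptimalStep.quadForm_nonpos_of_reflTransGen_zero RXd hX hGDARE hSG hPi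
    (Relation.ReflTransGen.mono hstep _ _ (ControlStep.reflTransGen_zero_pow_mulVec _ _ v k))

theorem stmt_13 (n m : ℕ)
    (A : Matrix (Fin n) (Fin n) ℝ) (B : Matrix (Fin n) (Fin m) ℝ)
    (Q : Matrix (Fin n) (Fin n) ℝ) (S : Matrix (Fin n) (Fin m) ℝ)
    (R : Matrix (Fin m) (Fin m) ℝ)
    (hQ : Qᵀ = Q) (hR : Rᵀ = R)
    (hPi : (Matrix.fromBlocks Q S Sᵀ R).PosSemidef)
    (X : Matrix (Fin n) (Fin n) ℝ) (hX : Xᵀ = X)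
    (RXd : Matrix (Fin m) (Fin m) ℝ)
    (pen1 : (R + Bᵀ * X * B) * RXd * (R + Bᵀ * X * B) = R + Bᵀ * X * B)
    (pen2 : RXd * (R + Bᵀ * X * B) * RXd = RXd)
    (pen3 : ((R + Bᵀ * X * B) * RXd)ᵀ = (R + Bᵀ * X * B) * RXd)
    (pen4 : (RXd * (R + Bᵀ * X * B))ᵀ = RXd * (R + Bᵀ * X * B))
    (hGDARE : X = Aᵀ * X * A - (Aᵀ * X * B + S) * RXd * (Aᵀ * X * B + S)ᵀ + Q)
    (hker : ∀ v : Fin m → ℝ, (R + Bᵀ * X * B).mulVec v = 0 → (Aᵀ * X * B + S).mulVec v = 0) :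
    ∀ k : ℕ,
      X * (A - B * (RXd * (Aᵀ * X * B + S)ᵀ)) ^ k
        * (B * (1 - RXd * (R + Bᵀ * X * B))) = 0 :=
  stmt_13_general n m A B Q S R hR hPi X hX RXd pen1 pen3 pen4 hGDARE hker
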